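/- arXiv:1904.01049 — 2 statements merged into one kernel-verified Lean document; each statement's English description precedes it below -/
import Mathlib

section
/- For every ρ ∈ [−1, 1], the two-task GP posterior predictive variance at a primary-task test point satisfies σ_T²(ρ) ≥ ρ²·σ_T²(1) + (1 − ρ²)·σ_T²(0); that is, it is bounded below by the convex combination (with weights ρ² and 1 − ρ²) of the posterior variance obtained when the two tasks are perfectly correlated and the posterior variance obtained when they are uncorrelated. -/
open Matrix

/-!
The training covariance is `A r = B r ⊙ (κ + D)` with `B r` the task correlation pattern (the
noise `D` sits on the diagonal, where `B r` is `1`), and the posterior variance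
`c - k rᵀ (A r)⁻¹ k r` is the minimum over `v` of `Q r v = c - 2 vᵀ k r + vᵀ A r v`.
With `a` equal to `ρ` on the primary task and `1` on the secondary one and `b` the indicator of the
primary task, `B ρ = a aᵀ ⊙ B 1 + (1 - ρ²) b bᵀ ⊙ B 0`, and likewise for the cross-covariances;
hence `Q ρ v = ρ² Q 1 (a ∘ v / ρ) + (1 - ρ²) Q 0 (b ∘ v)` for every `v`. Bounding both terms below
by their minima at the minimiser of `Q ρ` gives the claim. The first term is used in the
homogenised form `ρ² c - 2 ρ (a ∘ v)ᵀ k 1 + (a ∘ v)ᵀ A 1 (a ∘ v)`, so `ρ = 0` is no special case.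
-/

/-- Two-task ICM GP posterior predictive variance at a primary-task test point.
Indices `0, …, nT-1` of `κ` are primary-task training points, indices
`nT, …, nT+nS-1` are secondary-task training points, and index `nT+nS` is the
(primary-task) test point.  The task covariance matrix is `B = [[1, ρ], [ρ, 1]]`,
so covariances between points of the same task are `κ i j` and between points of
different tasks are `ρ * κ i j`.  Observation-noise standard deviations are `η`. -/
noncomputable def mtPostVar (nT nS : ℕ)
    (κ : Matrix (Fin (nT + nS + 1)) (Fin (nT + nS + 1)) ℝ)
    (η : Fin (nT + nS) → ℝ) (ρ : ℝ) : ℝ :=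
  let Kρ : Matrix (Fin (nT + nS)) (Fin (nT + nS)) ℝ :=
    Matrix.of fun i j =>
      (if ((i : ℕ) < nT ↔ (j : ℕ) < nT) then 1 else ρ) * κ i.castSucc j.castSucc
  let kρ : Fin (nT + nS) → ℝ := fun i =>
    (if (i : ℕ) < nT then 1 else ρ) * κ (Fin.last (nT + nS)) i.castSucc
  κ (Fin.last (nT + nS)) (Fin.last (nT + nS)) -
    kρ ⬝ᵥ (Kρ + Matrix.diagonal fun i => η i ^ 2)⁻¹ *ᵥ kρ

section Variational

variable {n : Type*} [Fintype n] [DecidableEq n] {A : Matrix n n ℝ}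

theorem dotProduct_inv_mulVec_eq_of_isUnit (hA : IsUnit A) (k : n → ℝ) :
    k ⬝ᵥ A⁻¹ *ᵥ k = 2 * ((A⁻¹ *ᵥ k) ⬝ᵥ k) - (A⁻¹ *ᵥ k) ⬝ᵥ A *ᵥ (A⁻¹ *ᵥ k) := by
  rw [mulVec_mulVec, mul_nonsing_inv _ ((isUnit_iff_isUnit_det A).mp hA), one_mulVec,
    dotProduct_comm]
  ring

/-- Homogenised form of `kᵀ A⁻¹ k = max_u (2 uᵀ k - uᵀ A u)`: the slack is
`(u - t A⁻¹ k)ᵀ A (u - t A⁻¹ k)`. -/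
theorem le_sq_mul_dotProduct_inv_mulVec (hA : A.PosDef) (k u : n → ℝ) (t : ℝ) :
    2 * t * (u ⬝ᵥ k) - u ⬝ᵥ A *ᵥ u ≤ t ^ 2 * (k ⬝ᵥ A⁻¹ *ᵥ k) := by
  set m := A⁻¹ *ᵥ k
  have hAm : A *ᵥ m = k := by
    rw [mulVec_mulVec, mul_nonsing_inv _ ((isUnit_iff_isUnit_det A).mp hA.isUnit), one_mulVec]
  have hAt : Aᵀ = A := by simpa using hA.isHermitian.eq
  have hmu : m ⬝ᵥ A *ᵥ u = u ⬝ᵥ k := by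
    rw [← dotProduct_transpose_mulVec, hAt, hAm]
  have h := hA.posSemidef.dotProduct_mulVec_nonneg (u - t • m)
  simp only [star_trivial, mulVec_sub, mulVec_smul, hAm, sub_dotProduct, dotProduct_sub,
    smul_dotProduct, dotProduct_smul, hmu, smul_eq_mul] at h
  rw [dotProduct_comm m k] at h
  linear_combination h

end Variational

section ICM

variable {ι : Type*} (p : ι → Prop) [DecidablePred p]

def taskWeight (a b : ℝ) : ι → ℝ := fun i => if p i then a else b

/-- The task covariance `[[1, r], [r, 1]]` evaluated at the tasks of two points. -/
def taskCorr (r : ℝ) : Matrix ι ι ℝ := of fun i j => if (p i ↔ p j) then 1 else r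

variable {p}

theorem taskCorr_hadamard_add_diagonal [DecidableEq ι] (r : ℝ) (κ : Matrix ι ι ℝ) (d : ι → ℝ) :
    taskCorr p r ⊙ κ + diagonal d = taskCorr p r ⊙ (κ + diagonal d) := by
  simp [hadamard_add, hadamard_diagonal, taskCorr]

variable [Fintype ι]

theorem taskCorr_posSemidef {r : ℝ} (hr : r ^ 2 ≤ 1) : (taskCorr p r).PosSemidef := by
  set s := √(1 - r ^ 2)
  have hs : s ^ 2 = 1 - r ^ 2 := Real.sq_sqrt (by linarith)
  -- the Gram matrix of the task vectors `(1, 0)` and `(r, s)`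
  have hgram : taskCorr p r = vecMulVec (taskWeight p 1 r) (taskWeight p 1 r) +
      vecMulVec (taskWeight p 0 s) (taskWeight p 0 s) := by
    ext i j
    by_cases hi : p i <;> by_cases hj : p j <;>
      simp [taskCorr, taskWeight, vecMulVec_apply, hi, hj, ← sq, hs]
  rw [hgram]
  simpa using (posSemidef_vecMulVec_self_star (taskWeight p 1 r)).add
    (posSemidef_vecMulVec_self_star (taskWeight p 0 s))

theorem dotProduct_taskWeight_mul (ρ : ℝ) (k w : ι → ℝ) :
    w ⬝ᵥ (taskWeight p 1 ρ * k) = ρ * ((taskWeight p ρ 1 * w) ⬝ᵥ (taskWeight p 1 1 * k)) +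
      (1 - ρ ^ 2) * ((taskWeight p 1 0 * w) ⬝ᵥ (taskWeight p 1 0 * k)) := by
  simp only [dotProduct, Finset.mul_sum, ← Finset.sum_add_distrib]
  refine Finset.sum_congr rfl fun i _ => ?_
  by_cases hi : p i <;> simp only [taskWeight, hi, if_true, if_false, Pi.mul_apply] <;> ring

theorem dotProduct_taskCorr_hadamard_mulVec (ρ : ℝ) (M : Matrix ι ι ℝ) (w : ι → ℝ) :
    w ⬝ᵥ (taskCorr p ρ ⊙ M) *ᵥ w =
      (taskWeight p ρ 1 * w) ⬝ᵥ (taskCorr p 1 ⊙ M) *ᵥ (taskWeight p ρ 1 * w) +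
      (1 - ρ ^ 2) * ((taskWeight p 1 0 * w) ⬝ᵥ (taskCorr p 0 ⊙ M) *ᵥ (taskWeight p 1 0 * w)) := by
  simp only [dotProduct, mulVec, Finset.mul_sum, ← Finset.sum_add_distrib]
  refine Finset.sum_congr rfl fun i _ => Finset.sum_congr rfl fun j _ => ?_
  by_cases hi : p i <;> by_cases hj : p j <;>
    simp only [taskWeight, taskCorr, hadamard_apply, of_apply, Pi.mul_apply, hi, hj, if_true,
      if_false, iff_self, iff_false, false_iff, not_true] <;> ring

theorem taskCorr_hadamard_add_diagonal_posDef [DecidableEq ι] {κ : Matrix ι ι ℝ}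
    (hκ : κ.PosSemidef) {d : ι → ℝ} (hd : ∀ i, 0 < d i) {r : ℝ} (hr : r ^ 2 ≤ 1) :
    (taskCorr p r ⊙ (κ + diagonal d)).PosDef := by
  rw [← taskCorr_hadamard_add_diagonal]
  exact PosDef.posSemidef_add ((taskCorr_posSemidef hr).hadamard hκ) (PosDef.diagonal hd)

variable (p) [DecidableEq ι]

/-- Posterior variance at a primary-task test point with prior variance `c`, spatial covariances
`k` to the training points, training Gram matrix `κ` and noise variances `d`. -/
noncomputable def icmPostVar (κ : Matrix ι ι ℝ) (d k : ι → ℝ) (c r : ℝ) : ℝ :=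
  c - (taskWeight p 1 r * k) ⬝ᵥ (taskCorr p r ⊙ κ + diagonal d)⁻¹ *ᵥ (taskWeight p 1 r * k)

variable {p}

theorem icmPostVar_convex_le {κ : Matrix ι ι ℝ} (hκ : κ.PosSemidef) {d : ι → ℝ}
    (hd : ∀ i, 0 < d i) (k : ι → ℝ) (c : ℝ) {ρ : ℝ} (hρ : ρ ^ 2 ≤ 1) :
    ρ ^ 2 * icmPostVar p κ d k c 1 + (1 - ρ ^ 2) * icmPostVar p κ d k c 0 ≤
      icmPostVar p κ d k c ρ := by
  have hApos : ∀ {r : ℝ}, r ^ 2 ≤ 1 → (taskCorr p r ⊙ (κ + diagonal d)).PosDef :=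
    taskCorr_hadamard_add_diagonal_posDef hκ hd
  simp only [icmPostVar, taskCorr_hadamard_add_diagonal]
  rw [dotProduct_inv_mulVec_eq_of_isUnit (hApos hρ).isUnit]
  generalize (taskCorr p ρ ⊙ (κ + diagonal d))⁻¹ *ᵥ (taskWeight p 1 ρ * k) = w
  rw [dotProduct_taskWeight_mul, dotProduct_taskCorr_hadamard_mulVec]
  have h1 := le_sq_mul_dotProduct_inv_mulVec (hApos (r := 1) (by norm_num))
    (taskWeight p 1 1 * k) (taskWeight p ρ 1 * w) ρ
  have h0 := le_sq_mul_dotProduct_inv_mulVec (hApos (r := 0) (by norm_num))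
    (taskWeight p 1 0 * k) (taskWeight p 1 0 * w) 1
  linarith [mul_le_mul_of_nonneg_left h0 (sub_nonneg.mpr hρ)]

end ICM

/-- For every `ρ ∈ [−1, 1]`, the two-task GP posterior predictive variance at a
primary-task test point satisfies
`σ_T²(ρ) ≥ ρ² ⬝ σ_T²(1) + (1 − ρ²) ⬝ σ_T²(0)`. -/
theorem mtPostVar_ge_convex_combination (nT nS : ℕ)
    (κ : Matrix (Fin (nT + nS + 1)) (Fin (nT + nS + 1)) ℝ)
    (hκ : κ.PosSemidef)
    (η : Fin (nT + nS) → ℝ) (hη : ∀ i, 0 < η i)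
    (ρ : ℝ) (hρ : ρ ∈ Set.Icc (-1 : ℝ) 1) :
    mtPostVar nT nS κ η ρ ≥
      ρ ^ 2 * mtPostVar nT nS κ η 1 + (1 - ρ ^ 2) * mtPostVar nT nS κ η 0 :=
  -- `mtPostVar` unfolds to `icmPostVar` for this task predicate and the blocks of `κ`
  icmPostVar_convex_le (p := fun i : Fin (nT + nS) => (i : ℕ) < nT) (hκ.submatrix Fin.castSucc)
    (fun i => pow_pos (hη i) 2) (fun i => κ (Fin.last _) i.castSucc) _
    (sq_le_one_iff_abs_le_one ρ |>.mpr (abs_le.mpr hρ))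
end

section
/- Let ε_κ(n) denote the single-task GP learning curve and ε_T(ρ, n_T, n_S) the two-task GP learning curve for task correlation ρ ∈ [−1, 1], n_T primary-task training points, and n_S secondary-task training points, where all training and test points are drawn i.i.d. from the probability measure μ. Then ε_T(ρ, n_T, n_S) ≥ ρ²·ε_κ(n_T + n_S) + (1 − ρ²)·ε_κ(n_T). -/
open Matrix MeasureTheory

/-- Single-task GP posterior predictive variance at test point `xs`, given `n`
training points `x` drawn from index set `E`, for kernel `k` and noise
variance `η2`. -/
noncomputable def stVar {E : Type*} (k : E → E → ℝ) (η2 : ℝ) (n : ℕ)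
    (x : Fin n → E) (xs : E) : ℝ :=
  k xs xs - (fun i => k xs (x i)) ⬝ᵥ
    ((Matrix.of fun i j => k (x i) (x j)) +
      η2 • (1 : Matrix (Fin n) (Fin n) ℝ))⁻¹ *ᵥ
    (fun i => k xs (x i))

/-- Two-task (ICM, task correlation `ρ`) GP posterior predictive variance at a
primary-task test point `xs`.  Training points `x i` with `(i : ℕ) < nT` belong
to the primary task and the remaining `nS` points belong to the secondary
task. -/
noncomputable def mtVar {E : Type*} (k : E → E → ℝ) (η2 : ℝ) (nT nS : ℕ) (ρ : ℝ)
    (x : Fin (nT + nS) → E) (xs : E) : ℝ :=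
  k xs xs - (fun i : Fin (nT + nS) => (if (i : ℕ) < nT then 1 else ρ) * k xs (x i)) ⬝ᵥ
    ((Matrix.of fun i j : Fin (nT + nS) =>
        (if ((i : ℕ) < nT ↔ (j : ℕ) < nT) then 1 else ρ) * k (x i) (x j)) +
      η2 • (1 : Matrix (Fin (nT + nS)) (Fin (nT + nS)) ℝ))⁻¹ *ᵥ
    (fun i : Fin (nT + nS) => (if (i : ℕ) < nT then 1 else ρ) * k xs (x i))

/-- Single-task learning curve `ε_κ(n)`: expected posterior predictive variance
where the `n` training points and the test point are drawn i.i.d. from `μ`. -/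
noncomputable def stLearningCurve {E : Type*} [MeasurableSpace E] (μ : Measure E)
    (k : E → E → ℝ) (η2 : ℝ) (n : ℕ) : ℝ :=
  ∫ x : Fin (n + 1) → E,
    stVar k η2 n (fun i => x i.castSucc) (x (Fin.last n)) ∂(Measure.pi fun _ => μ)

/-- Multi-task learning curve `ε_T(ρ, nT, nS)`: expected two-task posterior
predictive variance at a primary-task test point, where the `nT` primary-task
training points, the `nS` secondary-task training points, and the test point
are drawn i.i.d. from `μ`. -/
noncomputable def mtLearningCurve {E : Type*} [MeasurableSpace E] (μ : Measure E)
    (k : E → E → ℝ) (η2 : ℝ) (ρ : ℝ) (nT nS : ℕ) : ℝ :=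
  ∫ x : Fin (nT + nS + 1) → E,
    mtVar k η2 nT nS ρ (fun i => x i.castSucc) (x (Fin.last (nT + nS)))
    ∂(Measure.pi fun _ => μ)

/-! The posterior variance `c - κᵀ M⁻¹ κ` is the minimum over `a` of the risk
`c - 2 aᵀκ + aᵀ M a` of the linear predictor `a`. Let `D` be the diagonal matrix with entries `1`
on the primary and `ρ` on the secondary task. For `ρ ≠ 0`, the multi-task risk of `D b` equals
`ρ²` times the single-task risk of `b` on all `nT + nS` points plus `1 - ρ²` times that of `b`
restricted to the primary points. Minimising over `b` gives the bound pointwise in the sample; for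
`ρ = 0` the two tasks decouple. Integrating, and noting that the `nT` primary points together
with the test point are themselves an i.i.d. sample, yields the bound on the learning curves. -/

section PosteriorVariance

variable {ι : Type*} [Fintype ι]

def predictorRisk (M : Matrix ι ι ℝ) (κ : ι → ℝ) (c : ℝ) (a : ι → ℝ) : ℝ :=
  c - 2 * (a ⬝ᵥ κ) + a ⬝ᵥ M *ᵥ a

variable [DecidableEq ι]

noncomputable def posteriorVar (M : Matrix ι ι ℝ) (κ : ι → ℝ) (c : ℝ) : ℝ :=
  c - κ ⬝ᵥ M⁻¹ *ᵥ κ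

lemma predictorRisk_eq_posteriorVar_add {M : Matrix ι ι ℝ} (hM : M.PosDef) (κ : ι → ℝ)
    (c : ℝ) (a : ι → ℝ) :
    predictorRisk M κ c a =
      posteriorVar M κ c + (a - M⁻¹ *ᵥ κ) ⬝ᵥ M *ᵥ (a - M⁻¹ *ᵥ κ) := by
  have hMg : M *ᵥ (M⁻¹ *ᵥ κ) = κ := by
    rw [mulVec_mulVec, mul_nonsing_inv _ ((isUnit_iff_isUnit_det M).1 hM.isUnit), one_mulVec]
  have hsymm : ∀ u v, u ⬝ᵥ M *ᵥ v = v ⬝ᵥ M *ᵥ u := fun u v => by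
    rw [dotProduct_mulVec, ← mulVec_transpose, (isHermitian_iff_isSymm.1 hM.isHermitian).eq,
      dotProduct_comm]
  rw [predictorRisk, posteriorVar, mulVec_sub, dotProduct_sub, sub_dotProduct, sub_dotProduct,
    hsymm (M⁻¹ *ᵥ κ) a, hMg, dotProduct_comm a κ, dotProduct_comm (M⁻¹ *ᵥ κ) κ]
  ring

lemma posteriorVar_le_predictorRisk {M : Matrix ι ι ℝ} (hM : M.PosDef) (κ : ι → ℝ) (c : ℝ)
    (a : ι → ℝ) : posteriorVar M κ c ≤ predictorRisk M κ c a := by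
  rw [predictorRisk_eq_posteriorVar_add hM]
  simpa using hM.posSemidef.dotProduct_mulVec_nonneg (a - M⁻¹ *ᵥ κ)

lemma predictorRisk_inv_mulVec {M : Matrix ι ι ℝ} (hM : M.PosDef) (κ : ι → ℝ) (c : ℝ) :
    predictorRisk M κ c (M⁻¹ *ᵥ κ) = posteriorVar M κ c := by
  simp [predictorRisk_eq_posteriorVar_add hM]

lemma predictorRisk_add_smul_one (K : Matrix ι ι ℝ) (κ : ι → ℝ) (c η : ℝ)
    (a : ι → ℝ) : predictorRisk (K + η • 1) κ c a = predictorRisk K κ c a + η * (a ⬝ᵥ a) := by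
  simp only [predictorRisk, add_mulVec, smul_mulVec, one_mulVec, dotProduct_add,
    dotProduct_smul, smul_eq_mul]
  ring

lemma posteriorVar_le_self {M : Matrix ι ι ℝ} (hM : M.PosDef) (κ : ι → ℝ) (c : ℝ) :
    posteriorVar M κ c ≤ c := by
  simpa [posteriorVar] using hM.inv.posSemidef.dotProduct_mulVec_nonneg κ

lemma posteriorVar_add_smul_one_nonneg {K : Matrix ι ι ℝ} (hK : K.PosSemidef) {η : ℝ}
    (hη : 0 < η) {κ : ι → ℝ} {c : ℝ} (h : ∀ a, 0 ≤ predictorRisk K κ c a) :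
    0 ≤ posteriorVar (K + η • 1) κ c := by
  rw [← predictorRisk_inv_mulVec (PosDef.posSemidef_add hK (PosDef.one.smul hη)),
    predictorRisk_add_smul_one]
  exact add_nonneg (h _) (mul_nonneg hη.le (dotProduct_star_self_nonneg _))

end PosteriorVariance

section Coregionalization

variable {ι : Type*} [Fintype ι] (p : ι → Prop) [DecidablePred p] (ρ : ℝ)

def taskScale : ι → ℝ := fun i => if p i then 1 else ρ

/-- Covariance of the intrinsic coregionalization model; `p` marks the primary task. -/
def icmCov (K : Matrix ι ι ℝ) : Matrix ι ι ℝ :=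
  of fun i j => (if (p i ↔ p j) then 1 else ρ) * K i j

lemma taskScale_mul_dotProduct (u v : ι → ℝ) :
    (taskScale p ρ * u) ⬝ᵥ (taskScale p ρ * v) =
      ρ ^ 2 * (u ⬝ᵥ v) + (1 - ρ ^ 2) * ((taskScale p 0 * u) ⬝ᵥ v) := by
  simp only [dotProduct, Pi.mul_apply, Finset.mul_sum, ← Finset.sum_add_distrib]
  refine Finset.sum_congr rfl fun i _ => ?_
  simp only [taskScale]
  split_ifs <;> ring

lemma taskScale_mul_dotProduct_icmCov_mulVec (K : Matrix ι ι ℝ) (u v : ι → ℝ) :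
    (taskScale p ρ * u) ⬝ᵥ icmCov p ρ K *ᵥ (taskScale p ρ * v) =
      ρ ^ 2 * (u ⬝ᵥ K *ᵥ v) +
        (1 - ρ ^ 2) * ((taskScale p 0 * u) ⬝ᵥ K *ᵥ (taskScale p 0 * v)) := by
  simp only [dotProduct, mulVec, Pi.mul_apply, Finset.mul_sum, ← Finset.sum_add_distrib]
  refine Finset.sum_congr rfl fun i _ => Finset.sum_congr rfl fun j _ => ?_
  simp only [taskScale, icmCov, of_apply]
  split_ifs <;> simp_all <;> ring

lemma dotProduct_icmCov_zero_mulVec (K : Matrix ι ι ℝ) (u v : ι → ℝ) :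
    u ⬝ᵥ icmCov p 0 K *ᵥ v =
      (taskScale p 0 * u) ⬝ᵥ K *ᵥ (taskScale p 0 * v) +
        (taskScale (¬ p ·) 0 * u) ⬝ᵥ K *ᵥ (taskScale (¬ p ·) 0 * v) := by
  simp only [dotProduct, mulVec, Pi.mul_apply, Finset.mul_sum, ← Finset.sum_add_distrib]
  refine Finset.sum_congr rfl fun i _ => Finset.sum_congr rfl fun j _ => ?_
  simp only [taskScale, icmCov, of_apply]
  split_ifs <;> simp_all

lemma dotProduct_icmCov_mulVec (K : Matrix ι ι ℝ) (v : ι → ℝ) :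
    v ⬝ᵥ icmCov p ρ K *ᵥ v =
      (1 + ρ) / 2 * (v ⬝ᵥ K *ᵥ v) +
        (1 - ρ) / 2 * ((taskScale p (-1) * v) ⬝ᵥ K *ᵥ (taskScale p (-1) * v)) := by
  simp only [dotProduct, mulVec, Pi.mul_apply, Finset.mul_sum, ← Finset.sum_add_distrib]
  refine Finset.sum_congr rfl fun i _ => Finset.sum_congr rfl fun j _ => ?_
  simp only [taskScale, icmCov, of_apply]
  split_ifs <;> simp_all <;> ring

omit [Fintype ι] in
lemma icmCov_add_smul_one [DecidableEq ι] (K : Matrix ι ι ℝ) (η : ℝ) :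
    icmCov p ρ (K + η • 1) = icmCov p ρ K + η • 1 := by
  ext i j
  simp only [icmCov, of_apply, Matrix.add_apply, Matrix.smul_apply, one_apply, smul_eq_mul]
  split_ifs <;> simp_all

lemma posSemidef_icmCov {K : Matrix ι ι ℝ} (hK : K.PosSemidef) (hρ : ρ ∈ Set.Icc (-1) 1) :
    (icmCov p ρ K).PosSemidef := by
  refine .of_dotProduct_mulVec_nonneg ?_ fun v => ?_
  · refine isHermitian_iff_isSymm.2 (IsSymm.ext fun i j => ?_)
    simp only [icmCov, of_apply, iff_comm, (isHermitian_iff_isSymm.1 hK.isHermitian).apply i j]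
  · have h₁ := hK.dotProduct_mulVec_nonneg v
    have h₂ := hK.dotProduct_mulVec_nonneg (taskScale p (-1) * v)
    simp only [star_trivial] at h₁ h₂ ⊢
    rw [dotProduct_icmCov_mulVec]
    have : 0 ≤ 1 + ρ := by linarith [hρ.1]
    have : 0 ≤ 1 - ρ := by linarith [hρ.2]
    positivity

lemma predictorRisk_icmCov (M : Matrix ι ι ℝ) (κ : ι → ℝ) (c : ℝ) (b : ι → ℝ) :
    predictorRisk (icmCov p ρ M) (taskScale p ρ * κ) c (taskScale p ρ * b) =
      ρ ^ 2 * predictorRisk M κ c b + (1 - ρ ^ 2) * predictorRisk M κ c (taskScale p 0 * b) := by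
  rw [predictorRisk, taskScale_mul_dotProduct, taskScale_mul_dotProduct_icmCov_mulVec]
  simp only [predictorRisk]
  ring

lemma predictorRisk_icmCov_zero (M : Matrix ι ι ℝ) (κ : ι → ℝ) (c : ℝ) (a : ι → ℝ) :
    predictorRisk (icmCov p 0 M) (taskScale p 0 * κ) c a =
      predictorRisk M κ c (taskScale p 0 * a) +
        (taskScale (¬ p ·) 0 * a) ⬝ᵥ M *ᵥ (taskScale (¬ p ·) 0 * a) := by
  have hlin : a ⬝ᵥ (taskScale p 0 * κ) = (taskScale p 0 * a) ⬝ᵥ κ :=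
    Finset.sum_congr rfl fun i _ => by simp only [Pi.mul_apply]; ring
  rw [predictorRisk, dotProduct_icmCov_zero_mulVec, hlin, predictorRisk]
  ring

end Coregionalization

section TwoTasks

variable {nT nS : ℕ}

lemma predictorRisk_submatrix_castAdd (M : Matrix (Fin (nT + nS)) (Fin (nT + nS)) ℝ)
    (κ : Fin (nT + nS) → ℝ) (c : ℝ) (b : Fin (nT + nS) → ℝ) :
    predictorRisk (M.submatrix (Fin.castAdd nS) (Fin.castAdd nS)) (κ ∘ Fin.castAdd nS) c
        (b ∘ Fin.castAdd nS) =
      predictorRisk M κ c (taskScale (fun i : Fin (nT + nS) => (i : ℕ) < nT) 0 * b) := by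
  simp [predictorRisk, dotProduct, mulVec, Fin.sum_univ_add, taskScale]

lemma posteriorVar_castAdd_le_predictorRisk {K : Matrix (Fin (nT + nS)) (Fin (nT + nS)) ℝ}
    (hK : K.PosSemidef) {η : ℝ} (hη : 0 < η) (κ : Fin (nT + nS) → ℝ) (c : ℝ)
    (b : Fin (nT + nS) → ℝ) :
    posteriorVar (K.submatrix (Fin.castAdd nS) (Fin.castAdd nS) + η • 1) (κ ∘ Fin.castAdd nS) c ≤
      predictorRisk (K + η • 1) κ c (taskScale (fun i : Fin (nT + nS) => (i : ℕ) < nT) 0 * b) := by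
  have hsub : (K + η • 1).submatrix (Fin.castAdd nS) (Fin.castAdd nS) =
      K.submatrix (Fin.castAdd nS) (Fin.castAdd nS) + η • 1 := by
    ext i j
    simp [one_apply]
  rw [← predictorRisk_submatrix_castAdd, hsub]
  exact posteriorVar_le_predictorRisk
    (PosDef.posSemidef_add (hK.submatrix _) (PosDef.one.smul hη)) _ _ _

lemma convex_combination_posteriorVar_le_icmCov {K : Matrix (Fin (nT + nS)) (Fin (nT + nS)) ℝ} (hK : K.PosSemidef)
    {η : ℝ} (hη : 0 < η) {ρ : ℝ} (hρ : ρ ∈ Set.Icc (-1) 1) (κ : Fin (nT + nS) → ℝ) (c : ℝ) :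
    ρ ^ 2 * posteriorVar (K + η • 1) κ c +
        (1 - ρ ^ 2) * posteriorVar (K.submatrix (Fin.castAdd nS) (Fin.castAdd nS) + η • 1)
          (κ ∘ Fin.castAdd nS) c ≤
      posteriorVar (icmCov (fun i : Fin (nT + nS) => (i : ℕ) < nT) ρ K + η • 1)
        (taskScale (fun i : Fin (nT + nS) => (i : ℕ) < nT) ρ * κ) c := by
  set p : Fin (nT + nS) → Prop := fun i => (i : ℕ) < nT
  have hη1 : (η • 1 : Matrix (Fin (nT + nS)) (Fin (nT + nS)) ℝ).PosDef := PosDef.one.smul hη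
  have hM : (K + η • 1).PosDef := PosDef.posSemidef_add hK hη1
  have hMρ : (icmCov p ρ (K + η • 1)).PosDef := by
    rw [icmCov_add_smul_one]
    exact PosDef.posSemidef_add (posSemidef_icmCov p ρ hK hρ) hη1
  have hT := posteriorVar_castAdd_le_predictorRisk hK hη κ c
  rw [← icmCov_add_smul_one, ← predictorRisk_inv_mulVec hMρ]
  set a := (icmCov p ρ (K + η • 1))⁻¹ *ᵥ (taskScale p ρ * κ)
  rcases eq_or_ne ρ 0 with rfl | hρ0
  · rw [predictorRisk_icmCov_zero]
    have := hM.posSemidef.dotProduct_mulVec_nonneg (taskScale (¬ p ·) 0 * a)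
    simp only [star_trivial] at this
    norm_num
    linarith [hT a]
  · have hb : taskScale p ρ * (a / taskScale p ρ) = a := by
      ext i
      simp only [Pi.mul_apply, Pi.div_apply, taskScale]
      split_ifs <;> field_simp
    rw [← hb, predictorRisk_icmCov]
    have hρ2 : 0 ≤ 1 - ρ ^ 2 := sub_nonneg.2 ((sq_le_one_iff_abs_le_one ρ).2 (abs_le.2 hρ))
    exact add_le_add
      (mul_le_mul_of_nonneg_left (posteriorVar_le_predictorRisk hM _ _ _) (sq_nonneg ρ))
      (mul_le_mul_of_nonneg_left (hT _) hρ2)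

end TwoTasks

section Kernel

variable {E : Type*} {k : E → E → ℝ} {η2 : ℝ}

lemma predictorRisk_gram_nonneg (hk_symm : ∀ x y, k x y = k y x)
    (hk_psd : ∀ (m : ℕ) (x : Fin m → E), (Matrix.of fun i j => k (x i) (x j)).PosSemidef)
    {n : ℕ} (x : Fin n → E) (xs : E) (a : Fin n → ℝ) :
    0 ≤ predictorRisk (of fun i j => k (x i) (x j)) (fun i => k xs (x i)) (k xs xs) a := by
  have h := (hk_psd (n + 1) (Fin.cons xs x)).dotProduct_mulVec_nonneg (Fin.cons 1 (-a))
  simp only [star_trivial, dotProduct, mulVec, Fin.sum_univ_succ, of_apply, Fin.cons_zero,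
    Fin.cons_succ, Pi.neg_apply, hk_symm _ xs, one_mul, mul_one, mul_neg, neg_mul,
    mul_add, Finset.sum_add_distrib, Finset.sum_neg_distrib] at h
  have hcomm : ∑ i, k xs (x i) * a i = ∑ i, a i * k xs (x i) :=
    Finset.sum_congr rfl fun _ _ => mul_comm _ _
  simp only [predictorRisk, dotProduct, mulVec, of_apply]
  linarith

lemma stVar_nonneg (hk_symm : ∀ x y, k x y = k y x)
    (hk_psd : ∀ (m : ℕ) (x : Fin m → E), (Matrix.of fun i j => k (x i) (x j)).PosSemidef)
    (hη2 : 0 < η2) {n : ℕ} (x : Fin n → E) (xs : E) : 0 ≤ stVar k η2 n x xs :=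
  posteriorVar_add_smul_one_nonneg (hk_psd n x) hη2 (predictorRisk_gram_nonneg hk_symm hk_psd x xs)

lemma stVar_le
    (hk_psd : ∀ (m : ℕ) (x : Fin m → E), (Matrix.of fun i j => k (x i) (x j)).PosSemidef)
    (hη2 : 0 < η2) {n : ℕ} (x : Fin n → E) (xs : E) : stVar k η2 n x xs ≤ k xs xs :=
  posteriorVar_le_self (PosDef.posSemidef_add (hk_psd n x) (PosDef.one.smul hη2)) _ _

lemma mtVar_le
    (hk_psd : ∀ (m : ℕ) (x : Fin m → E), (Matrix.of fun i j => k (x i) (x j)).PosSemidef)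
    (hη2 : 0 < η2) {ρ : ℝ} (hρ : ρ ∈ Set.Icc (-1) 1) {nT nS : ℕ} (x : Fin (nT + nS) → E)
    (xs : E) : mtVar k η2 nT nS ρ x xs ≤ k xs xs :=
  posteriorVar_le_self (PosDef.posSemidef_add (posSemidef_icmCov _ ρ (hk_psd _ x) hρ)
    (PosDef.one.smul hη2)) _ _

lemma convex_combination_stVar_le_mtVar
    (hk_psd : ∀ (m : ℕ) (x : Fin m → E), (Matrix.of fun i j => k (x i) (x j)).PosSemidef)
    (hη2 : 0 < η2) {ρ : ℝ} (hρ : ρ ∈ Set.Icc (-1) 1) {nT nS : ℕ} (x : Fin (nT + nS) → E)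
    (xs : E) :
    ρ ^ 2 * stVar k η2 (nT + nS) x xs + (1 - ρ ^ 2) * stVar k η2 nT (x ∘ Fin.castAdd nS) xs ≤
      mtVar k η2 nT nS ρ x xs :=
  convex_combination_posteriorVar_le_icmCov (hk_psd _ x) hη2 hρ _ _

lemma mtVar_nonneg (hk_symm : ∀ x y, k x y = k y x)
    (hk_psd : ∀ (m : ℕ) (x : Fin m → E), (Matrix.of fun i j => k (x i) (x j)).PosSemidef)
    (hη2 : 0 < η2) {ρ : ℝ} (hρ : ρ ∈ Set.Icc (-1) 1) {nT nS : ℕ} (x : Fin (nT + nS) → E)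
    (xs : E) : 0 ≤ mtVar k η2 nT nS ρ x xs := by
  have hρ2 : 0 ≤ 1 - ρ ^ 2 := sub_nonneg.2 ((sq_le_one_iff_abs_le_one ρ).2 (abs_le.2 hρ))
  refine le_trans ?_ (convex_combination_stVar_le_mtVar hk_psd hη2 hρ x xs)
  exact add_nonneg (mul_nonneg (sq_nonneg ρ) (stVar_nonneg hk_symm hk_psd hη2 _ _))
    (mul_nonneg hρ2 (stVar_nonneg hk_symm hk_psd hη2 _ _))

end Kernel

section Measurability

variable {X ι : Type*} [MeasurableSpace X] [Fintype ι] [DecidableEq ι]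

lemma measurable_inv_apply {M : X → Matrix ι ι ℝ} (hM : ∀ i j, Measurable fun x => M x i j)
    (i j : ι) : Measurable fun x => (M x)⁻¹ i j := by
  have hM' : Measurable fun x => (of.symm (M x) : ι → ι → ℝ) :=
    measurable_pi_lambda _ fun i => measurable_pi_lambda _ (hM i)
  have hdet : Continuous fun B : ι → ι → ℝ => (of B).det := continuous_id.matrix_det
  have hadj : Continuous fun B : ι → ι → ℝ => (of B).adjugate i j :=
    continuous_id.matrix_adjugate.matrix_elem i j
  simp only [inv_def, Matrix.smul_apply, Ring.inverse_eq_inv', smul_eq_mul]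
  exact (hdet.measurable.comp hM').inv.mul (hadj.measurable.comp hM')

lemma measurable_posteriorVar {M : X → Matrix ι ι ℝ} {κ : X → ι → ℝ} {c : X → ℝ}
    (hM : ∀ i j, Measurable fun x => M x i j) (hκ : ∀ i, Measurable fun x => κ x i)
    (hc : Measurable c) : Measurable fun x => posteriorVar (M x) (κ x) (c x) :=
  hc.sub <| Finset.measurable_sum _ fun i _ =>
    (hκ i).mul <| Finset.measurable_sum _ fun j _ => (measurable_inv_apply hM i j).mul (hκ j)

variable {E : Type*} [MeasurableSpace E] {k : E → E → ℝ}

lemma measurable_stVar (hk : Measurable (Function.uncurry k)) (η2 : ℝ) (n : ℕ) :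
    Measurable fun y : Fin (n + 1) → E => stVar k η2 n (fun i => y i.castSucc) (y (Fin.last n)) := by
  have hk' : ∀ a b, Measurable fun y : Fin (n + 1) → E => k (y a) (y b) := fun a b =>
    hk.comp (f := fun y : _ → E => (y a, y b)) (by fun_prop)
  exact measurable_posteriorVar (fun i j => (hk' _ _).add measurable_const) (fun i => hk' _ _)
    (hk' _ _)

lemma measurable_mtVar (hk : Measurable (Function.uncurry k)) (η2 ρ : ℝ) (nT nS : ℕ) :
    Measurable fun y : Fin (nT + nS + 1) → E =>
      mtVar k η2 nT nS ρ (fun i => y i.castSucc) (y (Fin.last (nT + nS))) := by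
  have hk' : ∀ a b, Measurable fun y : Fin (nT + nS + 1) → E => k (y a) (y b) := fun a b =>
    hk.comp (f := fun y : _ → E => (y a, y b)) (by fun_prop)
  exact measurable_posteriorVar (fun i j => (measurable_const.mul (hk' _ _)).add measurable_const)
    (fun i => measurable_const.mul (hk' _ _)) (hk' _ _)

end Measurability

section LearningCurves

variable {E : Type*} [MeasurableSpace E] (μ : Measure E) [IsProbabilityMeasure μ]

lemma measurePreserving_comp_of_injective {ι κ : Type*} [Fintype ι] [Fintype κ] {f : ι → κ}
    (hf : Function.Injective f) :
    MeasurePreserving (fun x : κ → E => x ∘ f) (Measure.pi fun _ => μ)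
      (Measure.pi fun _ => μ) := by
  classical
  -- `x ∘ f` is the restriction of `x` to the range of `f`, relabelled along `f`.
  let e : {j // ∃ i, f i = j} ≃ ι := (Equiv.ofInjective f hf).symm
  have h := (measurePreserving_piCongrLeft (fun _ : ι => μ) e).comp
    (measurePreserving_fst.comp
      (measurePreserving_piEquivPiSubtypeProd (fun _ : κ => μ) (fun j => ∃ i, f i = j)))
  convert h using 1
  funext x i
  obtain ⟨r, rfl⟩ := e.surjective i
  simp only [Function.comp_apply, MeasurableEquiv.coe_piCongrLeft, Equiv.piCongrLeft_apply_apply]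
  exact congrArg x (Equiv.apply_ofInjective_symm hf r)

lemma integral_comp_of_injective {ι κ : Type*} [Fintype ι] [Fintype κ] {f : ι → κ}
    (hf : Function.Injective f) {g : (ι → E) → ℝ}
    (hg : AEStronglyMeasurable g (Measure.pi fun _ => μ)) :
    ∫ x, g (x ∘ f) ∂(Measure.pi fun _ => μ) = ∫ y, g y ∂(Measure.pi fun _ => μ) := by
  have hmp := measurePreserving_comp_of_injective μ hf
  rw [← hmp.map_eq, integral_map hmp.measurable.aemeasurable (hmp.map_eq ▸ hg)]

variable {k : E → E → ℝ} {η2 : ℝ}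

lemma integrable_stVar (hk_meas : Measurable (Function.uncurry k))
    (hk_symm : ∀ x y, k x y = k y x) (hk_bdd : ∃ C, ∀ x y, |k x y| ≤ C)
    (hk_psd : ∀ (m : ℕ) (x : Fin m → E), (Matrix.of fun i j => k (x i) (x j)).PosSemidef)
    (hη2 : 0 < η2) (n : ℕ) :
    Integrable (fun y : Fin (n + 1) → E => stVar k η2 n (fun i => y i.castSucc) (y (Fin.last n)))
      (Measure.pi fun _ => μ) := by
  obtain ⟨C, hC⟩ := hk_bdd
  refine .of_bound (measurable_stVar hk_meas η2 n).aestronglyMeasurable C (ae_of_all _ fun y => ?_)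
  rw [Real.norm_eq_abs, abs_of_nonneg (stVar_nonneg hk_symm hk_psd hη2 _ _)]
  exact (stVar_le hk_psd hη2 _ _).trans ((le_abs_self _).trans (hC _ _))

lemma integrable_mtVar (hk_meas : Measurable (Function.uncurry k))
    (hk_symm : ∀ x y, k x y = k y x) (hk_bdd : ∃ C, ∀ x y, |k x y| ≤ C)
    (hk_psd : ∀ (m : ℕ) (x : Fin m → E), (Matrix.of fun i j => k (x i) (x j)).PosSemidef)
    (hη2 : 0 < η2) {ρ : ℝ} (hρ : ρ ∈ Set.Icc (-1) 1) (nT nS : ℕ) :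
    Integrable (fun y : Fin (nT + nS + 1) → E =>
        mtVar k η2 nT nS ρ (fun i => y i.castSucc) (y (Fin.last (nT + nS))))
      (Measure.pi fun _ => μ) := by
  obtain ⟨C, hC⟩ := hk_bdd
  refine .of_bound (measurable_mtVar hk_meas η2 ρ nT nS).aestronglyMeasurable C
    (ae_of_all _ fun y => ?_)
  rw [Real.norm_eq_abs, abs_of_nonneg (mtVar_nonneg hk_symm hk_psd hη2 hρ _ _)]
  exact (mtVar_le hk_psd hη2 hρ _ _).trans ((le_abs_self _).trans (hC _ _))

end LearningCurves

/-- Learning-curve bound: `ε_T(ρ, n_T, n_S) ≥ ρ² ε_κ(n_T + n_S) + (1 − ρ²) ε_κ(n_T)`,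
for a measurable, symmetric, bounded, positive semidefinite kernel `k`, noise
variance `η2 > 0`, task correlation `ρ ∈ [−1, 1]`, and all points drawn i.i.d.
from the probability measure `μ`. -/
theorem mtLearningCurve_ge_convex_combination {E : Type*} [MeasurableSpace E]
    (μ : Measure E) [IsProbabilityMeasure μ]
    (k : E → E → ℝ) (hk_meas : Measurable (Function.uncurry k))
    (hk_symm : ∀ x y, k x y = k y x)
    (hk_bdd : ∃ C, ∀ x y, |k x y| ≤ C)
    (hk_psd : ∀ (m : ℕ) (x : Fin m → E),
      (Matrix.of fun i j => k (x i) (x j)).PosSemidef)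
    (η2 : ℝ) (hη2 : 0 < η2)
    (ρ : ℝ) (hρ : ρ ∈ Set.Icc (-1 : ℝ) 1)
    (nT nS : ℕ) :
    mtLearningCurve μ k η2 ρ nT nS ≥
      ρ ^ 2 * stLearningCurve μ k η2 (nT + nS) +
        (1 - ρ ^ 2) * stLearningCurve μ k η2 nT := by
  let e : Fin (nT + 1) → Fin (nT + nS + 1) :=
    Fin.snoc (fun i => (Fin.castAdd nS i).castSucc) (Fin.last _)
  have he : Function.Injective e :=
    Fin.snoc_injective_of_injective ((Fin.castSucc_injective _).comp (Fin.castAdd_injective _ _))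
      fun ⟨i, hi⟩ => (Fin.castSucc_lt_last _).ne hi
  have hmp := measurePreserving_comp_of_injective μ he
  have hT := integrable_stVar μ hk_meas hk_symm hk_bdd hk_psd hη2 nT
  have hmarg : stLearningCurve μ k η2 nT = ∫ y, stVar k η2 nT (fun i => (y ∘ e) i.castSucc)
      ((y ∘ e) (Fin.last nT)) ∂(Measure.pi fun _ => μ) :=
    (integral_comp_of_injective μ he hT.aestronglyMeasurable).symm
  have hF := integrable_stVar μ hk_meas hk_symm hk_bdd hk_psd hη2 (nT + nS)
  have hTe : Integrable (fun y => stVar k η2 nT (fun i => (y ∘ e) i.castSucc)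
      ((y ∘ e) (Fin.last nT))) (Measure.pi fun _ => μ) := hmp.integrable_comp_of_integrable hT
  rw [ge_iff_le, hmarg, stLearningCurve, mtLearningCurve, ← integral_const_mul,
    ← integral_const_mul, ← integral_add (hF.const_mul _) (hTe.const_mul _)]
  refine integral_mono ((hF.const_mul _).add (hTe.const_mul _))
    (integrable_mtVar μ hk_meas hk_symm hk_bdd hk_psd hη2 hρ nT nS) fun y => ?_
  simp only [e, Function.comp_apply, Fin.snoc_castSucc, Fin.snoc_last]
  exact convex_combination_stVar_le_mtVar hk_psd hη2 hρ (fun i => y i.castSucc) (y (Fin.last _))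
end
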